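/- Let 𝒜 = (A, Σ, δ, ρ) be a Mealy automaton, and for each k ≥ 0 let S_k be the semigroup of maps Σ^k → Σ^k generated by the restrictions of the production functions ρ_x (x ∈ A) to words of length k. If #S_k = #S_{k+1} for some k, then the semigroup ⟨𝒜⟩_+ generated by 𝒜 is finite of order #S_k, and restriction to Σ^k induces a semigroup isomorphism from ⟨𝒜⟩_+ onto S_k. -/
import Mathlib


/-- A Mealy automaton `(A, Σ, δ, ρ)` with stateset `A` and alphabet `X`:
`δ i : A → A` for each letter `i ∈ X`, and `ρ x : X → X` for each state `x ∈ A`. -/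
structure Mealy (A X : Type*) where
  δ : X → A → A
  ρ : A → X → X

namespace Mealy

variable {A X : Type*}

/-- The extended production function `ρ_x : Σ* → Σ*`, defined by
`ρ_x(ε) = ε` and `ρ_x(i·v) = ρ_x(i)·ρ_{δ_i(x)}(v)`. -/
def run (M : Mealy A X) : A → List X → List X
  | _, [] => []
  | x, i :: v => M.ρ x i :: run M (M.δ i x) v

end Mealy

namespace Mealy

/-- `run` as an element of the monoid `Function.End (List X)` of maps `Σ* → Σ*`
under composition. -/
def runE {A X : Type*} (M : Mealy A X) (x : A) : Function.End (List X) := M.run x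

/-- The semigroup `⟨𝒜⟩₊` generated by the automaton. -/
def sgp {A X : Type*} (M : Mealy A X) : Subsemigroup (Function.End (List X)) :=
  Subsemigroup.closure (Set.range M.runE)

end Mealy


namespace MealyAux

variable {A X : Type*}

lemma mem_closure_range_iff {M : Type*} [Monoid M] (h : A → M) (x : M) :
    x ∈ Subsemigroup.closure (Set.range h) ↔
      ∃ s : List A, s ≠ [] ∧ x = (s.map h).prod := by
  constructor
  · intro hx
    refine Subsemigroup.closure_induction ?_ ?_ hx
    · rintro _ ⟨a, rfl⟩; exact ⟨[a], by simp, by simp⟩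
    · rintro x y _ _ ⟨s, hs, rfl⟩ ⟨t, ht, rfl⟩
      exact ⟨s ++ t, by simp [hs], by simp⟩
  · rintro ⟨s, hs, rfl⟩
    induction s with
    | nil => exact absurd rfl hs
    | cons a s ih =>
      cases s with
      | nil => simpa using Subsemigroup.subset_closure (Set.mem_range_self a)
      | cons b t =>
        simp only [List.map_cons, List.prod_cons]
        exact Subsemigroup.mul_mem _ (Subsemigroup.subset_closure (Set.mem_range_self a))
          (by simpa using ih (by simp))

lemma prod_pair {M N : Type*} [Monoid M] [Monoid N] (h1 : A → M) (h2 : A → N) :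
    ∀ s : List A, (s.map fun a => (h1 a, h2 a)).prod = ((s.map h1).prod, (s.map h2).prod)
  | [] => rfl
  | a :: s => by simp [prod_pair h1 h2 s, Prod.ext_iff]

end MealyAux

namespace Mealy

variable {A X : Type*}

def Wl (M : Mealy A X) : List A → List X → List X
  | [], l => l
  | x :: s, l => M.run x (Wl M s l)

def outL (M : Mealy A X) : List A → X → X
  | [], i => i
  | x :: s, i => M.ρ x (outL M s i)

def derL (M : Mealy A X) : List A → X → List A
  | [], _ => []
  | x :: s, i => M.δ (outL M s i) x :: derL M s i

lemma derL_ne_nil (M : Mealy A X) {s : List A} (hs : s ≠ []) (i : X) :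
    M.derL s i ≠ [] := by
  cases s with
  | nil => exact absurd rfl hs
  | cons x s => simp [derL]

lemma run_length (M : Mealy A X) : ∀ (l : List X) (x : A), (M.run x l).length = l.length
  | [], _ => rfl
  | i :: v, x => by simp [Mealy.run, run_length M v]

lemma Wl_length (M : Mealy A X) : ∀ (s : List A) (l : List X), (M.Wl s l).length = l.length
  | [], _ => rfl
  | x :: s, l => by simp [Wl, run_length, Wl_length M s]

lemma run_append (M : Mealy A X) : ∀ (u v : List X) (x : A),
    M.run x (u ++ v) = M.run x u ++ M.run (u.foldl (fun a i => M.δ i a) x) v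
  | [], _, _ => rfl
  | i :: u, v, x => by simp [Mealy.run, run_append M u v]

lemma Wl_append (M : Mealy A X) : ∀ (s : List A) (u v : List X),
    ∃ r, M.Wl s (u ++ v) = M.Wl s u ++ r
  | [], _, v => ⟨v, rfl⟩
  | x :: s, u, v => by
    obtain ⟨r, hr⟩ := Wl_append M s u v
    refine ⟨M.run ((M.Wl s u).foldl (fun a i => M.δ i a) x) r, ?_⟩
    show M.run x (M.Wl s (u ++ v)) = M.run x (M.Wl s u) ++ _
    rw [hr, run_append]

lemma Wl_take (M : Mealy A X) (s : List A) (u v : List X) :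
    (M.Wl s (u ++ v)).take u.length = M.Wl s u := by
  obtain ⟨r, hr⟩ := M.Wl_append s u v
  rw [hr, List.take_left' ((M.Wl_length s u).trans rfl)]

lemma Wl_cons (M : Mealy A X) : ∀ (s : List A) (i : X) (v : List X),
    M.Wl s (i :: v) = M.outL s i :: M.Wl (M.derL s i) v
  | [], _, _ => rfl
  | x :: s, i, v => by simp [Wl, outL, derL, Wl_cons M s, Mealy.run]

def EqAt (M : Mealy A X) (m : ℕ) (s t : List A) : Prop :=
  ∀ v : List X, v.length = m → M.Wl s v = M.Wl t v

lemma eqAt_down (M : Mealy A X) [Nonempty X] {m : ℕ} {s t : List A}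
    (h : M.EqAt (m + 1) s t) : M.EqAt m s t := by
  intro v hv
  obtain ⟨a⟩ := ‹Nonempty X›
  have h0 := h (v ++ [a]) (by simp [hv])
  have h1 := M.Wl_take s v [a]
  have h2 := M.Wl_take t v [a]
  rw [h0, h2] at h1
  exact h1.symm

lemma eqAt_of_le (M : Mealy A X) [Nonempty X] {n m : ℕ} (hnm : n ≤ m) {s t : List A}
    (h : M.EqAt m s t) : M.EqAt n s t := by
  induction m with
  | zero => exact Nat.le_zero.mp hnm ▸ h
  | succ m ih =>
    rcases Nat.lt_or_ge n (m + 1) with h' | h'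
    · exact ih (Nat.lt_succ_iff.mp h') (M.eqAt_down h)
    · exact (Nat.le_antisymm hnm h') ▸ h

lemma eqAt_up (M : Mealy A X) [Nonempty X] {k : ℕ}
    (H : ∀ s t : List A, s ≠ [] → t ≠ [] → M.EqAt k s t → M.EqAt (k + 1) s t) :
    ∀ (m : ℕ) (s t : List A), s ≠ [] → t ≠ [] → M.EqAt k s t → M.EqAt (k + m) s t := by
  intro m
  induction m with
  | zero => exact fun s t _ _ h => h
  | succ m ih =>
    intro s t hs ht h v hv
    match v, hv with
    | i :: v', hv =>
      have hk1 := H s t hs ht h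
      obtain ⟨a⟩ := ‹Nonempty X›
      have hout : M.outL s i = M.outL t i := by
        have h0 := hk1 (i :: List.replicate k a) (by simp)
        rw [M.Wl_cons, M.Wl_cons, List.cons.injEq] at h0
        exact h0.1
      have hder : M.EqAt k (M.derL s i) (M.derL t i) := by
        intro w hw
        have h0 := hk1 (i :: w) (by rw [List.length_cons, hw])
        rw [M.Wl_cons, M.Wl_cons, List.cons.injEq] at h0
        exact h0.2
      have hv' : v'.length = k + m := by rw [List.length_cons] at hv; omega
      rw [M.Wl_cons, M.Wl_cons, hout,
        ih (M.derL s i) (M.derL t i) (M.derL_ne_nil hs i) (M.derL_ne_nil ht i) hder v' hv']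

lemma prod_apply_val {V : Type*} (M : Mealy A X) (h : A → Function.End V) (ι : V → List X)
    (hcomp : ∀ x u, ι (h x u) = M.run x (ι u)) :
    ∀ (s : List A) (u : V), ι ((s.map h).prod u) = M.Wl s (ι u)
  | [], _ => rfl
  | x :: s, u => by
    simp only [List.map_cons, List.prod_cons]
    rw [show ((h x * (s.map h).prod) u) = h x ((s.map h).prod u) from rfl, hcomp,
      prod_apply_val M h ι hcomp s u]
    rfl

lemma prod_runE (M : Mealy A X) (s : List A) (l : List X) :
    (s.map M.runE).prod l = M.Wl s l :=
  M.prod_apply_val M.runE id (fun _ _ => rfl) s l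

end Mealy

/-- for each `k`, the production functions restrict to maps
`Σ^k → Σ^k`, given as `f x : Function.End Σ^k` (`(f x u).1 = ρ_x(u)`), resp.
`g x : Function.End Σ^{k+1}`.  Let `S_k` (resp. `S_{k+1}`) be the semigroup of maps
of `Σ^k` (resp. `Σ^{k+1}`) generated by these restrictions.  If `#S_k = #S_{k+1}`,
then `⟨𝒜⟩₊` is finite of order `#S_k`, and restriction to `Σ^k` induces a semigroup
isomorphism from `⟨𝒜⟩₊` onto `S_k`. -/
theorem mealy_levelOfFaithfulAction_semigroup {A X : Type*} [Fintype A] [Fintype X]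
    [Nonempty A] [Nonempty X] (M : Mealy A X)
    (k : ℕ)
    (f : A → Function.End {u : List X // u.length = k})
    (hf : ∀ (x : A) (u : {u : List X // u.length = k}), (f x u).1 = M.run x u.1)
    (g : A → Function.End {u : List X // u.length = k + 1})
    (hg : ∀ (x : A) (u : {u : List X // u.length = k + 1}), (g x u).1 = M.run x u.1)
    (hcard : Nat.card ↥(Subsemigroup.closure (Set.range f)) =
             Nat.card ↥(Subsemigroup.closure (Set.range g))) :
    Finite ↥M.sgp ∧
    Nat.card ↥M.sgp = Nat.card ↥(Subsemigroup.closure (Set.range f)) ∧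
    ∃ φ : ↥M.sgp ≃* ↥(Subsemigroup.closure (Set.range f)),
      ∀ (σ : ↥M.sgp) (u : {u : List X // u.length = k}),
        (((φ σ).1 : {u : List X // u.length = k} → {u : List X // u.length = k}) u).1 =
          (σ.1 : List X → List X) u.1 := by
  classical
  haveI fink : Finite {u : List X // u.length = k} :=
    inferInstanceAs (Finite (List.Vector X k))
  haveI fink1 : Finite {u : List X // u.length = k + 1} :=
    inferInstanceAs (Finite (List.Vector X (k + 1)))
  haveI : Finite (Function.End {u : List X // u.length = k}) :=
    inferInstanceAs (Finite ({u : List X // u.length = k} → {u : List X // u.length = k}))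
  haveI : Finite (Function.End {u : List X // u.length = k + 1}) :=
    inferInstanceAs
      (Finite ({u : List X // u.length = k + 1} → {u : List X // u.length = k + 1}))
  set Sf := Subsemigroup.closure (Set.range f) with hSf
  set Sg := Subsemigroup.closure (Set.range g) with hSg
  have hFval : ∀ (s : List A) (u : {u : List X // u.length = k}),
      ((s.map f).prod u).1 = M.Wl s u.1 :=
    M.prod_apply_val f Subtype.val (fun x u => hf x u)
  have hGval : ∀ (s : List A) (u : {u : List X // u.length = k + 1}),
      ((s.map g).prod u).1 = M.Wl s u.1 :=
    M.prod_apply_val g Subtype.val (fun x u => hg x u)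
  have hFiff : ∀ s t : List A, (s.map f).prod = (t.map f).prod ↔ M.EqAt k s t := by
    intro s t
    constructor
    · intro h v hv
      have h0 := congrArg Subtype.val (congrFun h ⟨v, hv⟩)
      rwa [hFval, hFval] at h0
    · intro h
      funext u
      exact Subtype.ext (by rw [hFval, hFval, h u.1 u.2])
  have hGiff : ∀ s t : List A, (s.map g).prod = (t.map g).prod ↔ M.EqAt (k + 1) s t := by
    intro s t
    constructor
    · intro h v hv
      have h0 := congrArg Subtype.val (congrFun h ⟨v, hv⟩)
      rwa [hGval, hGval] at h0
    · intro h
      funext u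
      exact Subtype.ext (by rw [hGval, hGval, h u.1 u.2])
  -- the subsemigroup of pairs (g-action, f-action)
  set pgf : A → Function.End {u : List X // u.length = k + 1} ×
      Function.End {u : List X // u.length = k} := fun x => (g x, f x) with hpgf
  have memT1 : ∀ a, a ∈ Subsemigroup.closure (Set.range pgf) ↔
      ∃ s : List A, s ≠ [] ∧ a = ((s.map g).prod, (s.map f).prod) := by
    intro a
    rw [MealyAux.mem_closure_range_iff]
    constructor
    · rintro ⟨s, hs, rfl⟩
      exact ⟨s, hs, by rw [hpgf, MealyAux.prod_pair]⟩
    · rintro ⟨s, hs, rfl⟩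
      exact ⟨s, hs, by rw [hpgf, MealyAux.prod_pair]⟩
  -- projection to the g-coordinate is a bijection
  have e1mem : ∀ a : ↥(Subsemigroup.closure (Set.range pgf)), a.1.1 ∈ Sg := by
    rintro ⟨a, ha⟩
    obtain ⟨s, hs, rfl⟩ := (memT1 a).mp ha
    exact (MealyAux.mem_closure_range_iff g _).mpr ⟨s, hs, rfl⟩
  have hGF : ∀ s t : List A, (s.map g).prod = (t.map g).prod →
      (s.map f).prod = (t.map f).prod :=
    fun s t h => (hFiff s t).mpr (M.eqAt_down ((hGiff s t).mp h))
  have e1bij : Function.Bijective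
      (fun a : ↥(Subsemigroup.closure (Set.range pgf)) => (⟨a.1.1, e1mem a⟩ : ↥Sg)) := by
    constructor
    · rintro ⟨a, ha⟩ ⟨b, hb⟩ hab
      obtain ⟨s, hs, rfl⟩ := (memT1 a).mp ha
      obtain ⟨t, ht, rfl⟩ := (memT1 b).mp hb
      have h1 : (s.map g).prod = (t.map g).prod := congrArg Subtype.val hab
      exact Subtype.ext (Prod.ext h1 (hGF s t h1))
    · rintro ⟨b, hb⟩
      obtain ⟨s, hs, rfl⟩ := (MealyAux.mem_closure_range_iff g b).mp hb
      exact ⟨⟨((s.map g).prod, (s.map f).prod), (memT1 _).mpr ⟨s, hs, rfl⟩⟩, rfl⟩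
  have hcardT1 : Nat.card ↥(Subsemigroup.closure (Set.range pgf)) = Nat.card ↥Sg :=
    Nat.card_congr (Equiv.ofBijective _ e1bij)
  -- projection to the f-coordinate is surjective, hence bijective by cardinality
  have e2mem : ∀ a : ↥(Subsemigroup.closure (Set.range pgf)), a.1.2 ∈ Sf := by
    rintro ⟨a, ha⟩
    obtain ⟨s, hs, rfl⟩ := (memT1 a).mp ha
    exact (MealyAux.mem_closure_range_iff f _).mpr ⟨s, hs, rfl⟩
  have e2surj : Function.Surjective
      (fun a : ↥(Subsemigroup.closure (Set.range pgf)) => (⟨a.1.2, e2mem a⟩ : ↥Sf)) := by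
    rintro ⟨b, hb⟩
    obtain ⟨s, hs, rfl⟩ := (MealyAux.mem_closure_range_iff f b).mp hb
    exact ⟨⟨((s.map g).prod, (s.map f).prod), (memT1 _).mpr ⟨s, hs, rfl⟩⟩, rfl⟩
  have e2bij : Function.Bijective
      (fun a : ↥(Subsemigroup.closure (Set.range pgf)) => (⟨a.1.2, e2mem a⟩ : ↥Sf)) :=
    (Nat.bijective_iff_surjective_and_card _).mpr
      ⟨e2surj, hcardT1.trans hcard.symm⟩
  -- key step: agreement at level k implies agreement at level k+1
  have HF : ∀ s t : List A, s ≠ [] → t ≠ [] → (s.map f).prod = (t.map f).prod →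
      (s.map g).prod = (t.map g).prod := by
    intro s t hs ht h
    have ha : ((s.map g).prod, (s.map f).prod) ∈ Subsemigroup.closure (Set.range pgf) :=
      (memT1 _).mpr ⟨s, hs, rfl⟩
    have hb : ((t.map g).prod, (t.map f).prod) ∈ Subsemigroup.closure (Set.range pgf) :=
      (memT1 _).mpr ⟨t, ht, rfl⟩
    have h0 : (⟨((s.map g).prod, (s.map f).prod), ha⟩ :
        ↥(Subsemigroup.closure (Set.range pgf))) = ⟨((t.map g).prod, (t.map f).prod), hb⟩ :=
      e2bij.injective (Subtype.ext h)
    have h1 := congrArg Subtype.val h0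
    exact congrArg Prod.fst h1
  have H : ∀ s t : List A, s ≠ [] → t ≠ [] → M.EqAt k s t → M.EqAt (k + 1) s t :=
    fun s t hs ht h => (hGiff s t).mp (HF s t hs ht ((hFiff s t).mpr h))
  have Hfull : ∀ s t : List A, s ≠ [] → t ≠ [] → M.EqAt k s t → M.Wl s = M.Wl t := by
    intro s t hs ht h
    funext v
    rcases Nat.le_total v.length k with h' | h'
    · exact M.eqAt_of_le h' h v rfl
    · exact M.eqAt_up H (v.length - k) s t hs ht h v (by omega)
  -- the subsemigroup of pairs (full action, f-action)
  have hWprod : ∀ s : List A, ((s.map M.runE).prod : Function.End (List X)) = M.Wl s :=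
    fun s => funext (M.prod_runE s)
  set pwf : A → Function.End (List X) × Function.End {u : List X // u.length = k} :=
    fun x => (M.runE x, f x) with hpwf
  have memT2 : ∀ a, a ∈ Subsemigroup.closure (Set.range pwf) ↔
      ∃ s : List A, s ≠ [] ∧ a = ((s.map M.runE).prod, (s.map f).prod) := by
    intro a
    rw [MealyAux.mem_closure_range_iff]
    constructor
    · rintro ⟨s, hs, rfl⟩
      exact ⟨s, hs, by rw [hpwf, MealyAux.prod_pair]⟩
    · rintro ⟨s, hs, rfl⟩
      exact ⟨s, hs, by rw [hpwf, MealyAux.prod_pair]⟩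
  have memSgp : ∀ a, a ∈ M.sgp ↔ ∃ s : List A, s ≠ [] ∧ a = (s.map M.runE).prod :=
    fun a => MealyAux.mem_closure_range_iff M.runE a
  have q1mem : ∀ a : ↥(Subsemigroup.closure (Set.range pwf)), a.1.1 ∈ M.sgp := by
    rintro ⟨a, ha⟩
    obtain ⟨s, hs, rfl⟩ := (memT2 a).mp ha
    exact (memSgp _).mpr ⟨s, hs, rfl⟩
  have q2mem : ∀ a : ↥(Subsemigroup.closure (Set.range pwf)), a.1.2 ∈ Sf := by
    rintro ⟨a, ha⟩
    obtain ⟨s, hs, rfl⟩ := (memT2 a).mp ha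
    exact (MealyAux.mem_closure_range_iff f _).mpr ⟨s, hs, rfl⟩
  set q1 : ↥(Subsemigroup.closure (Set.range pwf)) →ₙ* ↥M.sgp :=
    { toFun := fun a => ⟨a.1.1, q1mem a⟩
      map_mul' := fun a b => rfl } with hq1
  set q2 : ↥(Subsemigroup.closure (Set.range pwf)) →ₙ* ↥Sf :=
    { toFun := fun a => ⟨a.1.2, q2mem a⟩
      map_mul' := fun a b => rfl } with hq2
  -- f-part determined by full part (restriction)
  have hWtoF : ∀ s t : List A, (s.map M.runE).prod = (t.map M.runE).prod →
      (s.map f).prod = (t.map f).prod := by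
    intro s t h
    refine (hFiff s t).mpr (fun v hv => ?_)
    have := congrFun ((hWprod s).symm.trans (h.trans (hWprod t))) v
    exact this
  have q1bij : Function.Bijective q1 := by
    constructor
    · rintro ⟨a, ha⟩ ⟨b, hb⟩ hab
      obtain ⟨s, hs, rfl⟩ := (memT2 a).mp ha
      obtain ⟨t, ht, rfl⟩ := (memT2 b).mp hb
      have h1 : (s.map M.runE).prod = (t.map M.runE).prod := congrArg Subtype.val hab
      exact Subtype.ext (Prod.ext h1 (hWtoF s t h1))
    · rintro ⟨b, hb⟩
      obtain ⟨s, hs, rfl⟩ := (memSgp b).mp hb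
      exact ⟨⟨((s.map M.runE).prod, (s.map f).prod), (memT2 _).mpr ⟨s, hs, rfl⟩⟩, rfl⟩
  have q2bij : Function.Bijective q2 := by
    constructor
    · rintro ⟨a, ha⟩ ⟨b, hb⟩ hab
      obtain ⟨s, hs, rfl⟩ := (memT2 a).mp ha
      obtain ⟨t, ht, rfl⟩ := (memT2 b).mp hb
      have h1 : (s.map f).prod = (t.map f).prod := congrArg Subtype.val hab
      have h2 : (s.map M.runE).prod = (t.map M.runE).prod := by
        rw [hWprod, hWprod]
        exact Hfull s t hs ht ((hFiff s t).mp h1)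
      exact Subtype.ext (Prod.ext h2 h1)
    · rintro ⟨b, hb⟩
      obtain ⟨s, hs, rfl⟩ := (MealyAux.mem_closure_range_iff f b).mp hb
      exact ⟨⟨((s.map M.runE).prod, (s.map f).prod), (memT2 _).mpr ⟨s, hs, rfl⟩⟩, rfl⟩
  set ψ : ↥(Subsemigroup.closure (Set.range pwf)) ≃* ↥M.sgp := MulEquiv.ofBijective q1 q1bij
  set χ : ↥(Subsemigroup.closure (Set.range pwf)) ≃* ↥Sf := MulEquiv.ofBijective q2 q2bij
  set φ : ↥M.sgp ≃* ↥Sf := ψ.symm.trans χ with hφ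
  haveI finT2 : Finite ↥(Subsemigroup.closure (Set.range pwf)) :=
    Finite.of_equiv ↥Sf χ.toEquiv.symm
  haveI finSgp : Finite ↥M.sgp := Finite.of_equiv _ ψ.toEquiv
  refine ⟨finSgp, Nat.card_congr φ.toEquiv, φ, ?_⟩
  intro σ u
  set a := ψ.symm σ with ha
  have haσ : (ψ a).1 = σ.1 := by rw [ha, MulEquiv.apply_symm_apply]
  have haσ' : a.1.1 = σ.1 := haσ
  obtain ⟨s, hs, hsa⟩ := (memT2 a.1).mp a.2
  have hφσ : (φ σ).1 = a.1.2 := rfl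
  rw [hφσ, hsa]
  have : ((s.map f).prod u).1 = M.Wl s u.1 := hFval s u
  rw [show (((s.map M.runE).prod, (s.map f).prod) :
      Function.End (List X) × Function.End {u : List X // u.length = k}).2 = (s.map f).prod
      from rfl, this]
  have h2 : σ.1 = (s.map M.runE).prod := by rw [← haσ', hsa]
  rw [h2, hWprod]
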